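/- arXiv:1712.03597 — 4 statements merged into one kernel-verified Lean document; each statement's English description precedes it below -/
import Mathlib

section
/- Let A, B be trace-free symmetric 2×2 real matrices and C a trace-free symmetric 2×2 real matrix. Then the matrix product A·C·B is again trace-free and symmetric. -/
open Matrix

theorem product_of_three_tracefree_symmetric_is_tracefree_symmetric
    (A B C : Matrix (Fin 2) (Fin 2) ℝ)
    (hA_tr : A.trace = 0) (hA_sym : Aᵀ = A)
    (hB_tr : B.trace = 0) (hB_sym : Bᵀ = B)
    (hC_tr : C.trace = 0) (hC_sym : Cᵀ = C) :
    (A * C * B).trace = 0 ∧ (A * C * B)ᵀ = A * C * B := by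
  rw [Matrix.trace_fin_two] at hA_tr hB_tr hC_tr
  have hA := fun i j => congrFun (congrFun hA_sym i) j
  have hB := fun i j => congrFun (congrFun hB_sym i) j
  have hC := fun i j => congrFun (congrFun hC_sym i) j
  simp only [Matrix.transpose_apply] at hA hB hC
  have a11 : A 1 1 = -A 0 0 := by linarith
  have b11 : B 1 1 = -B 0 0 := by linarith
  have c11 : C 1 1 = -C 0 0 := by linarith
  have a10 := hA 0 1; have b10 := hB 0 1; have c10 := hC 0 1
  constructor
  · rw [Matrix.trace_fin_two]
    simp only [Matrix.mul_apply, Fin.sum_univ_two, a11, b11, c11, a10, b10, c10]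
    ring
  · ext i j
    fin_cases i <;> fin_cases j <;>
      simp only [Fin.mk_zero, Fin.mk_one, Matrix.transpose_apply, Matrix.mul_apply, Fin.sum_univ_two,
        a11, b11, c11, a10, b10, c10] <;> ring
end

section
/- Let L, L₀, M be n×n matrices with L and L₀ symmetric positive definite and M symmetric positive semidefinite satisfying M L₀ M ≤ M. Then for every λ ∈ [0,1] the matrix L_λ = L₀ + λ [I + (1−λ)(L − L₀)M]^{-1} (L − L₀) is well defined (the inverse exists) and L_λ is positive definite. -/
/-!
Write `D = L - L₀`, `t = 1 - λ` and `B = 1 + t D M`, so that `L_λ = L₀ + λ B⁻¹ D`.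

`B` is invertible: if `(1 + t M D) u = 0` then `u = -t M w` with `w = D u`, and
`M L₀ M ≤ M` gives `uᵀ L u = uᵀ L₀ u + uᵀ w ≤ (t² - t) wᵀ M w ≤ 0`, so `u = 0`.

Positivity follows from the congruence identity
`B L_λ Bᵀ = λ L + t (1 + D M) L₀ (1 + D M)ᵀ + λ t D (M - M L₀ M) D`,
whose right-hand side is positive definite for `λ > 0`; at `λ = 0` we have `L_λ = L₀`.
-/

open Matrix

namespace Matrix

variable {n : Type*} [Fintype n]

theorem dotProduct_mulVec_mul_mul_self {M : Matrix n n ℝ} (hM : M.IsHermitian)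
    (A : Matrix n n ℝ) (w : n → ℝ) :
    (M *ᵥ w) ⬝ᵥ (A *ᵥ (M *ᵥ w)) = w ⬝ᵥ ((M * A * M) *ᵥ w) := by
  have hMw : M *ᵥ w = w ᵥ* M := by
    rw [← vecMul_transpose, ← conjTranspose_eq_transpose_of_trivial, hM.eq]
  rw [← mulVec_mulVec, ← mulVec_mulVec, dotProduct_mulVec w, ← hMw]

variable [DecidableEq n]

theorem isUnit_one_add_smul_sub_mul {L L₀ M : Matrix n n ℝ} (hL : L.PosDef)
    (hM : M.PosSemidef) (hMLM : (M - M * L₀ * M).PosSemidef) {t : ℝ} (ht₀ : 0 ≤ t)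
    (ht₁ : t ≤ 1) : IsUnit (1 + t • ((L - L₀) * M)) := by
  rw [isUnit_iff_isUnit_det, ← Matrix.smul_mul, det_one_add_mul_comm, ← isUnit_iff_isUnit_det,
    ← mulVec_injective_iff_isUnit]
  refine (injective_iff_map_eq_zero (mulVecLin _)).mpr fun u hu => ?_
  have hu_eq : u = -t • (M *ᵥ ((L - L₀) *ᵥ u)) := by
    rw [mulVecLin_apply, add_mulVec, one_mulVec, ← mulVec_mulVec, smul_mulVec, mulVec_smul] at hu
    rw [neg_smul]
    exact eq_neg_of_add_eq_zero_left hu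
  have hsplit : u ⬝ᵥ (L *ᵥ u) = u ⬝ᵥ (L₀ *ᵥ u) + u ⬝ᵥ ((L - L₀) *ᵥ u) := by
    rw [sub_mulVec, dotProduct_sub]
    ring
  generalize (L - L₀) *ᵥ u = w at hu_eq hsplit
  have hMw : 0 ≤ w ⬝ᵥ (M *ᵥ w) := by simpa using hM.dotProduct_mulVec_nonneg w
  have hMLMw : w ⬝ᵥ ((M * L₀ * M) *ᵥ w) ≤ w ⬝ᵥ (M *ᵥ w) := by
    simpa [sub_mulVec] using hMLM.dotProduct_mulVec_nonneg w
  have hLu : u ⬝ᵥ (L *ᵥ u) = t ^ 2 * w ⬝ᵥ ((M * L₀ * M) *ᵥ w) - t * w ⬝ᵥ (M *ᵥ w) := by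
    rw [hsplit, hu_eq, ← dotProduct_mulVec_mul_mul_self hM.isHermitian]
    simp only [mulVec_smul, smul_dotProduct, dotProduct_smul, smul_eq_mul,
      dotProduct_comm (M *ᵥ w) w]
    ring
  by_contra hu0
  have hLu_pos := hL.dotProduct_mulVec_pos hu0
  rw [star_trivial] at hLu_pos
  nlinarith [mul_nonneg ht₀ (sub_nonneg.mpr ht₁)]

noncomputable def laminationFamily (L L₀ M : Matrix n n ℝ) (lam : ℝ) : Matrix n n ℝ :=
  L₀ + lam • ((1 + (1 - lam) • ((L - L₀) * M))⁻¹ * (L - L₀))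

theorem mul_laminationFamily_mul_conjTranspose {L L₀ M : Matrix n n ℝ}
    (hL : L.IsHermitian) (hL₀ : L₀.IsHermitian) (hM : M.IsHermitian) {lam : ℝ}
    (hB : IsUnit (1 + (1 - lam) • ((L - L₀) * M))) :
    (1 + (1 - lam) • ((L - L₀) * M)) * laminationFamily L L₀ M lam *
        (1 + (1 - lam) • ((L - L₀) * M))ᴴ =
      lam • L + (1 - lam) • ((1 + (L - L₀) * M) * L₀ * (1 + (L - L₀) * M)ᴴ) +
        (lam * (1 - lam)) • ((L - L₀) * (M - M * L₀ * M) * (L - L₀)ᴴ) := by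
  rw [laminationFamily, mul_add, Matrix.mul_smul, ← Matrix.mul_assoc,
    mul_nonsing_inv _ ((isUnit_iff_isUnit_det _).mp hB), Matrix.one_mul]
  simp only [conjTranspose_add, conjTranspose_one, conjTranspose_smul, conjTranspose_mul,
    conjTranspose_sub, hL.eq, hL₀.eq, hM.eq, star_trivial]
  simp only [add_mul, mul_add, sub_mul, mul_sub, Matrix.smul_mul, Matrix.mul_smul,
    Matrix.one_mul, Matrix.mul_one, Matrix.mul_assoc, smul_add, smul_sub]
  module

theorem laminationFamily_posDef {L L₀ M : Matrix n n ℝ} (hL : L.PosDef) (hL₀ : L₀.PosDef)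
    (hM : M.PosSemidef) (hMLM : (M - M * L₀ * M).PosSemidef) {lam : ℝ} (hlam₀ : 0 ≤ lam)
    (hlam₁ : lam ≤ 1) : (laminationFamily L L₀ M lam).PosDef := by
  rcases hlam₀.eq_or_lt with rfl | hlam_pos
  · simpa [laminationFamily] using hL₀
  have hB := isUnit_one_add_smul_sub_mul hL hM hMLM (sub_nonneg.mpr hlam₁) (by linarith)
  rw [← hB.posDef_star_right_conjugate_iff, star_eq_conjTranspose,
    mul_laminationFamily_mul_conjTranspose hL.isHermitian hL₀.isHermitian hM.isHermitian hB]
  have hL₀_part := (hL₀.posSemidef.mul_mul_conjTranspose_same (1 + (L - L₀) * M)).smul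
    (sub_nonneg.mpr hlam₁)
  have hMLM_part := (hMLM.mul_mul_conjTranspose_same (L - L₀)).smul
    (mul_nonneg hlam₀ (sub_nonneg.mpr hlam₁))
  exact ((hL.smul hlam_pos).add_posSemidef hL₀_part).add_posSemidef hMLM_part

end Matrix

theorem lamination_family_posdef_general
    {n : ℕ} (L L₀ M : Matrix (Fin n) (Fin n) ℝ)
    (hL : L.PosDef)
    (hL₀ : L₀.PosDef)
    (hM : M.PosSemidef)
    (hMLM : (M - M * L₀ * M).PosSemidef)     -- M L₀ M ≤ M in the Loewner order
    (lam : ℝ) (hlam0 : 0 ≤ lam) (hlam1 : lam ≤ 1) :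
    IsUnit (1 + (1 - lam) • ((L - L₀) * M)) ∧
    (L₀ + lam • ((1 + (1 - lam) • ((L - L₀) * M))⁻¹ * (L - L₀))).PosDef :=
  ⟨isUnit_one_add_smul_sub_mul hL hM hMLM (sub_nonneg.mpr hlam1) (by linarith),
    laminationFamily_posDef hL hL₀ hM hMLM hlam0 hlam1⟩

theorem lamination_family_posdef
    {n : ℕ} (L L₀ M : Matrix (Fin n) (Fin n) ℝ)
    (hL : L.PosDef) (hLsym : Lᵀ = L)
    (hL₀ : L₀.PosDef) (hL₀sym : L₀ᵀ = L₀)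
    (hM : M.PosSemidef)
    (hMLM : (M - M * L₀ * M).PosSemidef)     -- M L₀ M ≤ M in the Loewner order
    (lam : ℝ) (hlam0 : 0 ≤ lam) (hlam1 : lam ≤ 1) :
    IsUnit (1 + (1 - lam) • ((L - L₀) * M)) ∧
    (L₀ + lam • ((1 + (1 - lam) • ((L - L₀) * M))⁻¹ * (L - L₀))).PosDef :=
  lamination_family_posdef_general L L₀ M hL hL₀ hM hMLM lam hlam0 hlam1
end

section
/- Let L, L₀, M be n×n matrices such that I + (L−L₀)M and I + (1−λ)(L−L₀)M are invertible for a given scalar λ. Define K = [I + (L−L₀)M]^{-1}(L−L₀) and L_λ = L₀ + λ[I + (1−λ)(L−L₀)M]^{-1}(L−L₀). Then W_M(L_λ) = λ K, i.e. [I + (L_λ−L₀)M]^{-1}(L_λ−L₀) = λ [I + (L−L₀)M]^{-1}(L−L₀). -/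
open Matrix

theorem homothety_in_W_variables
    {n : ℕ} (L L₀ M : Matrix (Fin n) (Fin n) ℝ) (lam : ℝ)
    (h1 : IsUnit (1 + (L - L₀) * M))
    (h2 : IsUnit (1 + (1 - lam) • ((L - L₀) * M)))
    (K Llam : Matrix (Fin n) (Fin n) ℝ)
    (hK : K = (1 + (L - L₀) * M)⁻¹ * (L - L₀))
    (hLlam : Llam = L₀ + lam • ((1 + (1 - lam) • ((L - L₀) * M))⁻¹ * (L - L₀)))
    (h3 : IsUnit (1 + (Llam - L₀) * M)) :
    (1 + (Llam - L₀) * M)⁻¹ * (Llam - L₀) = lam • K := by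
  set A := L - L₀ with hA
  set B := 1 + A * M with hB
  set C := 1 + (1 - lam) • (A * M) with hC
  have hCdet : IsUnit C.det := (Matrix.isUnit_iff_isUnit_det C).mp h2
  have hCinv : C⁻¹ * C = 1 := Matrix.nonsing_inv_mul C hCdet
  have hCC : C * C⁻¹ = 1 := Matrix.mul_nonsing_inv C hCdet
  have hdiff : Llam - L₀ = lam • (C⁻¹ * A) := by
    rw [hLlam]; abel
  have hBC : B = C + lam • (A * M) := by
    rw [hB, hC]
    have : (1 - lam) • (A * M) + lam • (A * M) = A * M := by
      rw [← add_smul]; ring_nf; rw [one_smul]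
    rw [add_assoc, this]
  have hD : 1 + (Llam - L₀) * M = C⁻¹ * B := by
    rw [hdiff, hBC, Matrix.mul_add, hCinv, Matrix.mul_smul,
      Matrix.smul_mul, Matrix.mul_assoc]
  rw [hD, hdiff, Matrix.mul_inv_rev, Matrix.nonsing_inv_nonsing_inv C hCdet,
    Matrix.mul_smul, Matrix.mul_assoc, ← Matrix.mul_assoc C, hCC, Matrix.one_mul,
    hK]
end

section
/- Let L, L₀, M, Γ be n×n matrices and λ a scalar such that all inverses below exist. Define K = [I+(L−L₀)M]^{-1}(L−L₀), Ψ = M − Γ, and L_λ = L₀ + λ[I+(1−λ)(L−L₀)M]^{-1}(L−L₀). Then (I − λKΨ)^{-1} λK = [I + (L_λ − L₀)Γ]^{-1}(L_λ − L₀). -/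
open Matrix

theorem resolvent_of_KPsi_equals_Llam_formula
    {n : ℕ} (L L₀ M Γ : Matrix (Fin n) (Fin n) ℝ) (lam : ℝ)
    (K Ψ Llam : Matrix (Fin n) (Fin n) ℝ)
    (hK : K = (1 + (L - L₀) * M)⁻¹ * (L - L₀))
    (hΨ : Ψ = M - Γ)
    (hLlam : Llam = L₀ + lam • ((1 + (1 - lam) • ((L - L₀) * M))⁻¹ * (L - L₀)))
    (h1 : IsUnit (1 + (L - L₀) * M))
    (h2 : IsUnit (1 + (1 - lam) • ((L - L₀) * M)))
    (h3 : IsUnit (1 - lam • (K * Ψ)))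
    (h4 : IsUnit (1 + (Llam - L₀) * Γ)) :
    (1 - lam • (K * Ψ))⁻¹ * (lam • K) = (1 + (Llam - L₀) * Γ)⁻¹ * (Llam - L₀) := by
  have hUd : IsUnit (1 + (L - L₀) * M).det := (Matrix.isUnit_iff_isUnit_det _).mp h1
  have hBd : IsUnit (1 + (1 - lam) • ((L - L₀) * M)).det :=
    (Matrix.isUnit_iff_isUnit_det _).mp h2
  set A : Matrix (Fin n) (Fin n) ℝ := L - L₀ with hAdef
  set U : Matrix (Fin n) (Fin n) ℝ := 1 + A * M with hUdef
  set B : Matrix (Fin n) (Fin n) ℝ := 1 + (1 - lam) • (A * M) with hBdef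
  set C : Matrix (Fin n) (Fin n) ℝ := B + lam • (A * Γ) with hCdef
  have hD : Llam - L₀ = lam • (B⁻¹ * A) := by
    rw [hLlam]; abel
  have hUK : U * K = A := by
    rw [hK, ← Matrix.mul_assoc, Matrix.mul_nonsing_inv _ hUd, Matrix.one_mul]
  have hBinvA : B * (B⁻¹ * A) = A := by
    rw [← Matrix.mul_assoc, Matrix.mul_nonsing_inv _ hBd, Matrix.one_mul]
  have hBD : B * (Llam - L₀) = lam • A := by
    rw [hD, Matrix.mul_smul, hBinvA]
  have hUX : U * (1 - lam • (K * Ψ)) = C := by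
    have step : U * (1 - lam • (K * Ψ)) = U - lam • (A * Ψ) := by
      rw [Matrix.mul_sub, Matrix.mul_one, Matrix.mul_smul, ← Matrix.mul_assoc, hUK]
    rw [step, hΨ, hUdef, hCdef, hBdef, Matrix.mul_sub]
    module
  have hBY : B * (1 + (Llam - L₀) * Γ) = C := by
    rw [Matrix.mul_add, Matrix.mul_one, ← Matrix.mul_assoc, hBD, hCdef, Matrix.smul_mul]
  have hXinv : (1 - lam • (K * Ψ))⁻¹ = C⁻¹ * U := by
    have : (1 - lam • (K * Ψ)) = U⁻¹ * C := by
      rw [← hUX, ← Matrix.mul_assoc, Matrix.nonsing_inv_mul _ hUd, Matrix.one_mul]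
    rw [this, Matrix.mul_inv_rev, Matrix.nonsing_inv_nonsing_inv _ hUd]
  have hYinv : (1 + (Llam - L₀) * Γ)⁻¹ = C⁻¹ * B := by
    have : (1 + (Llam - L₀) * Γ) = B⁻¹ * C := by
      rw [← hBY, ← Matrix.mul_assoc, Matrix.nonsing_inv_mul _ hBd, Matrix.one_mul]
    rw [this, Matrix.mul_inv_rev, Matrix.nonsing_inv_nonsing_inv _ hBd]
  rw [hXinv, hYinv, Matrix.mul_assoc, Matrix.mul_assoc, Matrix.mul_smul, hUK, hBD]
end
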